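/- For integers n and k with 2 ≤ k ≤ n, the lollipop graph LP(n,k) satisfies ecc(LP(n,k))·ω(LP(n,k)) = (k/n)·⌊(−k² − 2k(n−1) + n(2+3n))/4⌋, and for every connected simple graph G on n ≥ 4 vertices, ecc(G)·ω(G) ≤ max_{2 ≤ k ≤ n} ecc(LP(n,k))·k; that is, the maximum value of ecc(G)·ω(G) over connected graphs on n vertices is achieved by some lollipop graph. -/

import Mathlib

open SimpleGraph

/-- The eccentricity of a vertex: the maximum distance from it to any other vertex. -/
noncomputable def eccentricity {V : Type*} [Fintype V] (G : SimpleGraph V) (v : V) : ℕ :=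
  Finset.univ.sup fun u => G.dist v u

/-- The average eccentricity of a graph. -/
noncomputable def avgEcc {V : Type*} [Fintype V] (G : SimpleGraph V) : ℝ :=
  (∑ v : V, (eccentricity G v : ℝ)) / (Fintype.card V : ℝ)

/-- The lollipop graph `LP(n, k)`: a clique on the vertices `0, …, k-1`, a path
`k — (k+1) — ⋯ — (n-1)`, and an edge joining the clique vertex `0` to the path
end `k`. -/
def lollipop (n k : ℕ) : SimpleGraph (Fin n) :=
  SimpleGraph.fromRel (fun i j =>
    ((i : ℕ) < k ∧ (j : ℕ) < k) ∨
    (k ≤ (i : ℕ) ∧ (j : ℕ) = (i : ℕ) + 1) ∨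
    ((i : ℕ) = 0 ∧ (j : ℕ) = k))

/-!
For a connected graph on `n` vertices with a clique `K`, put `m = n - #K + 1`. The distances from
a vertex `v` take every value `0, …, ecc v`, but at most two values on `K`, so `ecc v ≤ m`. Delete
a vertex `v₀ ∉ K` farthest from a fixed vertex of `K`: the graph stays connected, every other
eccentricity drops by at most one, and the eccentricities of the first `⌊ecc v₀ / 2⌋` vertices of a
geodesic from `v₀` to a vertex farthest from it do not drop at all, since those vertices are nearer
to that far end than to `v₀`. Induction on `n` gives `∑ ecc ≤ n m - ⌊m² / 4⌋`. In `LP(n, k)` the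
vertex at level `l` of the stick has eccentricity `max l (m - l)`, so the lollipop attains this
bound; and `ω(LP(n, k)) = k`, so `LP(n, ω(G))` beats `G`.
-/

open Finset

lemma Nat.succ_mul_succ_div_four (m : ℕ) : (m + 1) * (m + 1) / 4 = m * m / 4 + (m + 1) / 2 := by
  rcases Nat.even_or_odd' m with ⟨t, rfl | rfl⟩ <;> ring_nf <;> omega

lemma Finset.sum_range_max_add_mul_div_four (L : ℕ) :
    ∑ l ∈ range L, max (l + 1) (L - (l + 1)) + L * L / 4 = L * L := by
  induction L using Nat.twoStepInduction with
  | zero => simp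
  | one => simp
  | more L ih _ =>
    have hshift : ∑ l ∈ range L, max (l + 1 + 1) (L + 2 - (l + 1 + 1)) =
        ∑ l ∈ range L, (max (l + 1) (L - (l + 1)) + 1) :=
      sum_congr rfl fun l hl => by have := mem_range.1 hl; omega
    have : (L + 2) * (L + 2) = L * L + 4 * (L + 1) := by ring
    rw [sum_range_succ', sum_range_succ, hshift, sum_add_distrib, sum_const, card_range]
    simp only [smul_eq_mul, mul_one]
    omega

lemma Nat.quadratic_div_four_add_sq_div_four {n k : ℕ} (hk : 1 ≤ k) (hkn : k ≤ n) :
    (n * (2 + 3 * n) - k * k - 2 * k * (n - 1)) / 4 + (n - k + 1) * (n - k + 1) / 4 =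
      n * (n - k + 1) := by
  obtain ⟨j, rfl⟩ : ∃ j, k = j + 1 := ⟨k - 1, by omega⟩
  obtain ⟨p, rfl⟩ : ∃ p, n = j + 1 + p := ⟨n - (j + 1), by omega⟩
  rw [show j + 1 + p - 1 = j + p by omega, show j + 1 + p - (j + 1) + 1 = p + 1 by omega]
  -- with `m = n - k + 1` the numerator is `4 n m - m² + 1`, and `m² % 4 ≤ 1`
  have key : (j + 1 + p) * (2 + 3 * (j + 1 + p)) + (p + 1) * (p + 1) =
      (j + 1) * (j + 1) + 2 * (j + 1) * (j + p) + 4 * ((j + 1 + p) * (p + 1)) + 1 := by ring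
  have hle : (p + 1) * (p + 1) ≤ (j + 1 + p) * (p + 1) := Nat.mul_le_mul_right _ (by omega)
  have hmod : (p + 1) * (p + 1) % 4 = 0 ∨ (p + 1) * (p + 1) % 4 = 1 := by
    rcases Nat.even_or_odd' (p + 1) with ⟨t, ht | ht⟩ <;> rw [ht] <;> ring_nf <;> omega
  omega

lemma Finset.card_le_two_of_forall_le_add_one {s : Finset ℕ} (h : ∀ a ∈ s, ∀ b ∈ s, a ≤ b + 1) :
    #s ≤ 2 := by
  rcases s.eq_empty_or_nonempty with rfl | hs
  · simp
  have hsub : s ⊆ Icc (s.min' hs) (s.min' hs + 1) := fun a ha =>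
    mem_Icc.2 ⟨s.min'_le a ha, h a ha _ (s.min'_mem hs)⟩
  have := card_le_card hsub
  rw [Nat.card_Icc] at this
  omega

lemma Finset.sum_add_card_filter_le {ι : Type*} (s : Finset ι) {f g : ι → ℕ}
    (h : ∀ i ∈ s, f i ≤ g i + 1) : ∑ i ∈ s, f i + #{i ∈ s | f i ≤ g i} ≤ ∑ i ∈ s, g i + #s := by
  rw [card_filter, card_eq_sum_ones, ← sum_add_distrib, ← sum_add_distrib]
  exact sum_le_sum fun i hi => by have := h i hi; split_ifs <;> omega

namespace SimpleGraph

section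

variable {V W : Type*} {G : SimpleGraph V} {u v v₀ : V}

lemma Reachable.dist_map_le {H : SimpleGraph W} (f : G →g H) (h : G.Reachable u v) :
    H.dist (f u) (f v) ≤ G.dist u v := by
  obtain ⟨p, hp⟩ := h.exists_walk_length_eq_dist
  exact hp ▸ (dist_le (p.map f)).trans_eq (p.length_map f)

lemma Reachable.exists_dist_eq_of_le (h : G.Reachable u v) {i : ℕ} (hi : i ≤ G.dist u v) :
    ∃ w, G.dist u w = i ∧ G.dist w v = G.dist u v - i := by
  obtain ⟨p, hp⟩ := h.exists_walk_length_eq_dist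
  have h₁ : G.dist u (p.getVert i) ≤ i := (dist_le (p.take i)).trans (by simp [Walk.take_length])
  have h₂ : G.dist (p.getVert i) v ≤ G.dist u v - i :=
    (dist_le (p.drop i)).trans (by simp [Walk.drop_length, hp])
  have h₃ := (p.take i).reachable.dist_triangle_left v
  exact ⟨p.getVert i, by omega, by omega⟩

theorem dist_eq_of_forall_adj {D : V → V → ℕ} (hself : ∀ v, D v v = 0)
    (hle : ∀ a b v, G.Adj a b → D a v ≤ D b v + 1)
    (hlt : ∀ a v, a ≠ v → ∃ b, G.Adj a b ∧ D b v < D a v) (u v : V) :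
    G.dist u v = D u v := by
  have lower : ∀ {a b} (p : G.Walk a b), D a b ≤ p.length := by
    intro a b p
    induction p with
    | nil => simp [hself]
    | cons h q ih => simpa only [Walk.length_cons] using (hle _ _ _ h).trans (by omega)
  have upper : ∀ a, ∃ p : G.Walk a v, p.length ≤ D a v := by
    intro a
    induction hd : D a v using Nat.strong_induction_on generalizing a with
    | _ d ih =>
      by_cases ha : a = v
      · subst ha
        exact ⟨.nil, by simp⟩
      · obtain ⟨b, hab, hb⟩ := hlt a v ha
        obtain ⟨p, hp⟩ := ih _ (hd ▸ hb) b rfl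
        exact ⟨.cons hab p, by simp only [Walk.length_cons]; omega⟩
  obtain ⟨p, hp⟩ := upper u
  obtain ⟨q, hq⟩ := p.reachable.exists_walk_length_eq_dist
  exact le_antisymm ((dist_le p).trans hp) (hq ▸ lower q)

lemma Connected.induce_compl_singleton_of_forall_dist_le (hG : G.Connected) {c : V}
    (hc : c ≠ v₀) (hmax : ∀ v, G.dist c v ≤ G.dist c v₀) : (G.induce {v₀}ᶜ).Connected := by
  rw [connected_iff_exists_forall_reachable]
  refine ⟨⟨c, hc⟩, ?_⟩
  rintro ⟨v, hv⟩
  induction hd : G.dist c v using Nat.strong_induction_on generalizing v with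
  | _ d ih =>
    obtain rfl | hcv := eq_or_ne c v
    · rfl
    have hpos := hG.pos_dist_of_ne hcv
    obtain ⟨w, hw, hwv⟩ := (hG c v).exists_dist_eq_of_le (Nat.sub_le (G.dist c v) 1)
    have hwv₀ : w ≠ v₀ := by
      rintro rfl
      have := hmax v
      omega
    have hadj : G.Adj w v := dist_eq_one_iff_adj.1 (by omega)
    exact (ih _ (by omega) w hwv₀ rfl).trans
      (Adj.reachable (G := G.induce {v₀}ᶜ) (u := ⟨w, hwv₀⟩) (v := ⟨v, hv⟩) hadj)

lemma IsClique.subtype {s : Set V} {K : Finset V} (hK : G.IsClique (K : Set V))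
    [DecidablePred (· ∈ s)] : (G.induce s).IsClique (K.subtype (· ∈ s) : Set s) := by
  intro a ha b hb hab
  simp only [mem_coe, mem_subtype] at ha hb
  exact hK ha hb (Subtype.coe_injective.ne hab)

lemma Adj.two_le_cliqueNum [Finite V] {w : V} (h : G.Adj u w) : 2 ≤ G.cliqueNum := by
  classical
  have hK : G.IsClique (({u, w} : Finset V) : Set V) := by
    rw [coe_pair]
    exact isClique_pair.2 fun _ => h
  simpa [card_pair h.ne] using hK.card_le_cliqueNum

end

section Eccentricity

variable {V : Type*} [Fintype V] {G : SimpleGraph V} {v₀ : V}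

lemma dist_le_eccentricity (G : SimpleGraph V) (v u : V) : G.dist v u ≤ eccentricity G v :=
  le_sup (mem_univ u)

lemma eccentricity_le_iff {v : V} {e : ℕ} : eccentricity G v ≤ e ↔ ∀ u, G.dist v u ≤ e := by
  simp [eccentricity]

lemma exists_dist_eq_eccentricity (G : SimpleGraph V) (v : V) :
    ∃ u, G.dist v u = eccentricity G v := by
  obtain ⟨u, -, hu⟩ := exists_mem_eq_sup univ ⟨v, mem_univ v⟩ (G.dist v)
  exact ⟨u, hu.symm⟩

theorem eccentricity_add_card_le_of_isClique (hG : G.Connected) {K : Finset V}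
    (hK : G.IsClique (K : Set V)) (v : V) : eccentricity G v + #K ≤ Fintype.card V + 1 := by
  classical
  have hlevels : range (eccentricity G v + 1) ⊆ univ.image (G.dist v) := by
    intro i hi
    obtain ⟨u, hu⟩ := exists_dist_eq_eccentricity G v
    obtain ⟨w, hw, -⟩ := (hG v u).exists_dist_eq_of_le (i := i) (by rw [mem_range] at hi; omega)
    exact mem_image.2 ⟨w, mem_univ w, hw⟩
  have hK₂ : #(K.image (G.dist v)) ≤ 2 := by
    refine card_le_two_of_forall_le_add_one ?_
    simp only [mem_image]
    rintro _ ⟨a, ha, rfl⟩ _ ⟨b, hb, rfl⟩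
    obtain rfl | hab := eq_or_ne a b
    · omega
    have := (hK ha hb hab).diff_dist_adj (u := v)
    omega
  have hcard := calc
    eccentricity G v + 1 = #(range (eccentricity G v + 1)) := (card_range _).symm
    _ ≤ #(univ.image (G.dist v)) := card_le_card hlevels
    _ = #((K ∪ Kᶜ).image (G.dist v)) := by rw [union_compl]
    _ ≤ #(K.image (G.dist v)) + #(Kᶜ.image (G.dist v)) := by
      rw [image_union]; exact card_union_le _ _
    _ ≤ 2 + #Kᶜ := add_le_add hK₂ card_image_le
  rw [card_compl] at hcard
  have := card_le_univ K
  omega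

lemma Connected.exists_notMem_forall_dist_le (hG : G.Connected) {K : Finset V}
    (hK : G.IsClique (K : Set V)) {c : V} (hc : c ∈ K) (hKu : K ≠ univ) :
    ∃ v₀ ∉ K, ∀ v, G.dist c v ≤ G.dist c v₀ := by
  classical
  obtain ⟨x, hx⟩ : (Kᶜ).Nonempty := nonempty_iff_ne_empty.2 (by rwa [Ne, compl_eq_empty_iff])
  obtain ⟨v₀, hv₀, hv₀max⟩ := exists_max_image Kᶜ (G.dist c) ⟨x, hx⟩
  rw [mem_compl] at hv₀
  refine ⟨v₀, hv₀, fun v => ?_⟩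
  by_cases hv : v ∈ K
  · have := hG.pos_dist_of_ne (ne_of_mem_of_not_mem hc hv₀)
    obtain rfl | hcv := eq_or_ne c v
    · simp
    · rw [dist_eq_one_iff_adj.2 (hK hc hv hcv)]
      omega
  · exact hv₀max v (mem_compl.2 hv)

omit [Fintype V] in
lemma dist_le_eccentricity_induce {s : Set V} [Fintype s] (hs : (G.induce s).Connected)
    (a b : s) : G.dist a b ≤ eccentricity (G.induce s) a :=
  ((hs a b).dist_map_le (Embedding.induce s).toHom).trans (dist_le_eccentricity _ a b)

section DecidableEq

variable [DecidableEq V]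

lemma eccentricity_le_max_of_induce_compl (hG' : (G.induce {v₀}ᶜ).Connected)
    (a : ({v₀}ᶜ : Set V)) :
    eccentricity G a ≤ max (eccentricity (G.induce {v₀}ᶜ) a) (G.dist a v₀) := by
  refine eccentricity_le_iff.2 fun u => ?_
  obtain rfl | hu := eq_or_ne u v₀
  · exact le_max_right _ _
  · exact le_max_of_le_left (dist_le_eccentricity_induce hG' a ⟨u, hu⟩)

lemma eccentricity_div_two_le_card_filter (hG : G.Connected)
    (hG' : (G.induce {v₀}ᶜ).Connected) :
    eccentricity G v₀ / 2 ≤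
      #{a : ({v₀}ᶜ : Set V) | eccentricity G a ≤ eccentricity (G.induce {v₀}ᶜ) a} := by
  obtain ⟨y, hy⟩ := exists_dist_eq_eccentricity G v₀
  set T : Finset ({v₀}ᶜ : Set V) :=
    {a | eccentricity G a ≤ eccentricity (G.induce {v₀}ᶜ) a}
  have hsurj : Set.SurjOn (fun a : ({v₀}ᶜ : Set V) => G.dist v₀ a) T
      (Icc 1 (eccentricity G v₀ / 2)) := by
    intro j hj
    rw [coe_Icc, Set.mem_Icc] at hj
    obtain ⟨w, hw, hwy⟩ := (hG v₀ y).exists_dist_eq_of_le (i := j) (by omega)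
    have hwv₀ : w ≠ v₀ := by rintro rfl; simp at hw; omega
    have hyv₀ : y ≠ v₀ := by rintro rfl; simp at hy; omega
    refine ⟨⟨w, hwv₀⟩, ?_, hw⟩
    have h₁ : eccentricity G w ≤ max (eccentricity (G.induce {v₀}ᶜ) ⟨w, hwv₀⟩) (G.dist v₀ w) :=
      dist_comm (u := v₀) ▸ eccentricity_le_max_of_induce_compl hG' ⟨w, hwv₀⟩
    have h₂ : G.dist w y ≤ eccentricity (G.induce {v₀}ᶜ) ⟨w, hwv₀⟩ :=
      dist_le_eccentricity_induce hG' ⟨w, hwv₀⟩ ⟨y, hyv₀⟩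
    simp only [T, coe_filter, mem_univ, true_and, Set.mem_ofPred_eq]
    omega
  simpa using card_le_card_of_surjOn _ hsurj

theorem sum_eccentricity_add_le_of_induce_compl [Nontrivial V] (hG : G.Connected)
    (hG' : (G.induce {v₀}ᶜ).Connected) :
    ∑ v, eccentricity G v + eccentricity G v₀ / 2 ≤
      eccentricity G v₀ + ∑ a, eccentricity (G.induce {v₀}ᶜ) a + (Fintype.card V - 1) := by
  obtain ⟨u, hu⟩ := hG.preconnected.exists_adj_of_nontrivial v₀
  have hsucc (a : ({v₀}ᶜ : Set V)) :
      eccentricity G a ≤ eccentricity (G.induce {v₀}ᶜ) a + 1 := by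
    have h₁ := eccentricity_le_max_of_induce_compl hG' a
    have h₂ : G.dist a u ≤ eccentricity (G.induce {v₀}ᶜ) a :=
      dist_le_eccentricity_induce hG' a ⟨u, hu.ne'⟩
    have h₃ := hu.diff_dist_adj (u := (a : V))
    omega
  have hsplit : ∑ v, eccentricity G v =
      eccentricity G v₀ + ∑ a : ({v₀}ᶜ : Set V), eccentricity G a := by
    rw [Fintype.sum_eq_add_sum_compl v₀,
      sum_subtype (p := (· ∈ ({v₀}ᶜ : Set V))) _ fun x => by simp]
  have hcard : Fintype.card ({v₀}ᶜ : Set V) = Fintype.card V - 1 := by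
    rw [Fintype.card_compl_set]
    simp
  have := sum_add_card_filter_le univ fun a _ => hsucc a
  have := eccentricity_div_two_le_card_filter hG hG'
  rw [card_univ, hcard] at *
  omega

end DecidableEq

theorem sum_eccentricity_add_le_of_isClique (hG : G.Connected) {K : Finset V}
    (hK : G.IsClique (K : Set V)) (hK₀ : K.Nonempty) :
    ∑ v, eccentricity G v + (Fintype.card V - #K + 1) * (Fintype.card V - #K + 1) / 4 ≤
      Fintype.card V * (Fintype.card V - #K + 1) := by
  classical
  induction hn : Fintype.card V generalizing V with
  | zero =>
    have := hK₀.card_pos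
    have := card_le_univ K
    omega
  | succ n ih =>
    have hecc (v : V) : eccentricity G v + #K ≤ n + 1 + 1 :=
      hn ▸ eccentricity_add_card_le_of_isClique hG hK v
    by_cases hKu : K = univ
    · have hsum := sum_le_card_nsmul univ (eccentricity G) 1 fun v _ => by
        have := hecc v
        rw [hKu, card_univ, hn] at this
        omega
      rw [hKu, card_univ, hn] at *
      simpa using hsum
    obtain ⟨c, hc⟩ := id hK₀
    obtain ⟨v₀, hv₀, hmax⟩ := hG.exists_notMem_forall_dist_le hK hc hKu
    have hcv₀ : c ≠ v₀ := by rintro rfl; exact hv₀ hc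
    have hG' := hG.induce_compl_singleton_of_forall_dist_le hcv₀ hmax
    have hK' := hK.subtype (s := {v₀}ᶜ)
    have hcardK' : #(K.subtype (· ∈ ({v₀}ᶜ : Set V))) = #K := by
      rw [card_subtype, filter_true_of_mem]
      rintro v hv rfl
      exact hv₀ hv
    have hcardS : Fintype.card ({v₀}ᶜ : Set V) = n := by
      rw [Fintype.card_compl_set]
      simp [hn]
    have hKS : #K ≤ n := hcardK' ▸ hcardS ▸ card_le_univ _
    have hind := ih hG' hK' (card_pos.1 (hcardK' ▸ hK₀.card_pos)) hcardS
    have : Nontrivial V := nontrivial_of_ne c v₀ hcv₀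
    have hstep := sum_eccentricity_add_le_of_induce_compl hG hG'
    have he₀ := hecc v₀
    rw [hn] at hstep
    obtain ⟨m, hm⟩ : ∃ m, n - #K + 1 = m := ⟨_, rfl⟩
    rw [show n + 1 - #K + 1 = m + 1 by omega, Nat.succ_mul_succ_div_four]
    rw [hcardK', hm] at hind
    have : (n + 1) * (m + 1) = n * m + n + m + 1 := by ring
    omega

end Eccentricity

end SimpleGraph

/-- The distance in `LP(n, k)` from vertex `i` to the clique vertices other than `0`. -/
def lollipopLevel (k i : ℕ) : ℕ :=
  if k ≤ i then i - k + 2 else if i = 0 then 1 else 0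

section Lollipop

variable {n k : ℕ}

lemma lollipopLevel_cases (hk : 0 < k) (i : ℕ) :
    k ≤ i ∧ lollipopLevel k i = i - k + 2 ∨ i = 0 ∧ lollipopLevel k i = 1 ∨
      0 < i ∧ i < k ∧ lollipopLevel k i = 0 := by
  unfold lollipopLevel
  split_ifs <;> omega

lemma lollipop_adj {i j : Fin n} : (lollipop n k).Adj i j ↔ (i : ℕ) ≠ j ∧
    ((i : ℕ) < k ∧ (j : ℕ) < k ∨ k ≤ (i : ℕ) ∧ (j : ℕ) = i + 1 ∨ k ≤ (j : ℕ) ∧ (i : ℕ) = j + 1 ∨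
      (i : ℕ) = 0 ∧ (j : ℕ) = k ∨ (j : ℕ) = 0 ∧ (i : ℕ) = k) := by
  simp only [lollipop, fromRel_adj, ne_eq, Fin.ext_iff]
  omega

lemma dist_lollipop (hk : 2 ≤ k) (i j : Fin n) :
    (lollipop n k).dist i j = if (i : ℕ) = j then 0 else if (i : ℕ) < k ∧ (j : ℕ) < k then 1
      else Nat.dist (lollipopLevel k i) (lollipopLevel k j) := by
  have hlevel := lollipopLevel_cases (k := k) (by omega)
  apply dist_eq_of_forall_adj
  · simp
  · intro a b v hab
    rw [lollipop_adj] at hab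
    have := hlevel a
    have := hlevel b
    have := hlevel v
    simp only [Nat.dist]
    split_ifs <;> omega
  · intro a v hav
    have hav' : (a : ℕ) ≠ v := Fin.val_ne_iff.2 hav
    have := a.isLt
    have := v.isLt
    -- inside the clique step to `v`, otherwise one level along the stick towards `v`
    obtain ⟨b, hb, hab, hdist⟩ : ∃ b < n, ((a : ℕ) ≠ b ∧ ((a : ℕ) < k ∧ b < k ∨
        k ≤ (a : ℕ) ∧ b = a + 1 ∨ k ≤ b ∧ (a : ℕ) = b + 1 ∨ (a : ℕ) = 0 ∧ b = k ∨
        b = 0 ∧ (a : ℕ) = k)) ∧ (if b = v then 0 else if b < k ∧ (v : ℕ) < k then 1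
          else Nat.dist (lollipopLevel k b) (lollipopLevel k v)) <
        if (a : ℕ) < k ∧ (v : ℕ) < k then 1 else
          Nat.dist (lollipopLevel k a) (lollipopLevel k v) := by
      have hcases : (a : ℕ) < k ∧ (v : ℕ) < k ∨ k ≤ (a : ℕ) ∧ (a : ℕ) < v ∨
          k < (a : ℕ) ∧ (v : ℕ) < a ∨ (a : ℕ) = k ∧ (v : ℕ) < a ∨ (a : ℕ) < k ∧ k ≤ (v : ℕ) := by
        omega
      rcases hcases with h | h | h | h | h
      · exact ⟨v, v.isLt, by omega, by simp [h]⟩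
      · refine ⟨a + 1, by omega, by omega, ?_⟩
        simp only [Nat.dist, lollipopLevel]
        split_ifs <;> omega
      · refine ⟨a - 1, by omega, by omega, ?_⟩
        simp only [Nat.dist, lollipopLevel]
        split_ifs <;> omega
      · refine ⟨0, by omega, by omega, ?_⟩
        simp only [Nat.dist, lollipopLevel]
        split_ifs <;> omega
      · obtain h0 | h0 := eq_or_ne (a : ℕ) 0
        · refine ⟨k, by omega, by omega, ?_⟩
          simp only [Nat.dist, lollipopLevel]
          split_ifs <;> omega
        · refine ⟨0, by omega, by omega, ?_⟩
          simp only [Nat.dist, lollipopLevel]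
          split_ifs <;> omega
    refine ⟨⟨b, hb⟩, lollipop_adj.2 hab, ?_⟩
    simpa [hav'] using hdist

lemma connected_lollipop (hk : 2 ≤ k) (hkn : k ≤ n) : (lollipop n k).Connected := by
  have : Nonempty (Fin n) := ⟨⟨0, by omega⟩⟩
  refine ⟨fun i j => ?_⟩
  obtain rfl | hij := eq_or_ne i j
  · rfl
  refine Reachable.of_dist_ne_zero ?_
  have := Fin.val_ne_iff.2 hij
  rw [dist_lollipop hk]
  simp only [Nat.dist, lollipopLevel]
  split_ifs <;> omega

lemma eccentricity_lollipop (hk : 2 ≤ k) (hkn : k ≤ n) (v : Fin n) :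
    eccentricity (lollipop n k) v =
      max (lollipopLevel k v) (n - k + 1 - lollipopLevel k v) := by
  have := v.isLt
  refine le_antisymm (eccentricity_le_iff.2 fun u => ?_) ?_
  · have := u.isLt
    rw [dist_lollipop hk]
    simp only [Nat.dist, lollipopLevel]
    split_ifs <;> omega
  · have h₀ := dist_le_eccentricity (lollipop n k) v ⟨0, by omega⟩
    have h₁ := dist_le_eccentricity (lollipop n k) v ⟨1, by omega⟩
    have h₂ := dist_le_eccentricity (lollipop n k) v ⟨n - 1, by omega⟩
    rw [dist_lollipop hk] at h₀ h₁ h₂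
    simp only [Nat.dist, lollipopLevel] at *
    split_ifs at * <;> omega

theorem sum_eccentricity_lollipop (hk : 2 ≤ k) (hkn : k ≤ n) :
    ∑ v, eccentricity (lollipop n k) v + (n - k + 1) * (n - k + 1) / 4 = n * (n - k + 1) := by
  simp_rw [eccentricity_lollipop hk hkn]
  rw [Fin.sum_univ_eq_sum_range fun i => max (lollipopLevel k i) (n - k + 1 - lollipopLevel k i),
    ← sum_range_add_sum_Ico _ hkn, sum_Ico_eq_sum_range]
  obtain ⟨k, rfl⟩ : ∃ k', k = k' + 1 := ⟨k - 1, by omega⟩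
  obtain ⟨p, rfl⟩ : ∃ p, n = k + 1 + p := ⟨n - (k + 1), by omega⟩
  have hclique : ∑ i ∈ range k, max (lollipopLevel (k + 1) (i + 1))
      (p + 1 - lollipopLevel (k + 1) (i + 1)) = k * (p + 1) := by
    rw [show k * (p + 1) = ∑ _i ∈ range k, (p + 1) by simp]
    refine sum_congr rfl fun i hi => ?_
    have := lollipopLevel_cases (k := k + 1) (by omega) (i + 1)
    rw [mem_range] at hi
    omega
  have hstick : ∑ j ∈ range p, max (lollipopLevel (k + 1) (k + 1 + j))
      (p + 1 - lollipopLevel (k + 1) (k + 1 + j)) =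
        ∑ j ∈ range p, max (j + 1 + 1) (p + 1 - (j + 1 + 1)) :=
    sum_congr rfl fun j _ => by
      have := lollipopLevel_cases (k := k + 1) (by omega) (k + 1 + j)
      omega
  have hL := sum_range_max_add_mul_div_four (p + 1)
  rw [sum_range_succ'] at hL
  have : (k + 1 + p) * (p + 1) = k * (p + 1) + (p + 1) * (p + 1) := by ring
  rw [Nat.add_sub_cancel_left, sum_range_succ', hclique, hstick]
  have := lollipopLevel_cases (k := k + 1) (by omega) 0
  omega

theorem cliqueNum_lollipop (hk : 2 ≤ k) (hkn : k ≤ n) : (lollipop n k).cliqueNum = k := by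
  refine le_antisymm ?_ ?_
  · obtain ⟨K, hK⟩ := (lollipop n k).exists_isNClique_cliqueNum
    have hecc := eccentricity_add_card_le_of_isClique (connected_lollipop hk hkn) hK.isClique
      ⟨1, by omega⟩
    rw [eccentricity_lollipop hk hkn, hK.card_eq, Fintype.card_fin] at hecc
    dsimp only at hecc
    have := lollipopLevel_cases (k := k) (by omega) 1
    omega
  · have hK : (lollipop n k).IsClique (univ.map (Fin.castLEEmb hkn) : Set (Fin n)) := by
      simp only [coe_map, coe_univ, Set.image_univ]
      rintro _ ⟨a, rfl⟩ _ ⟨b, rfl⟩ hab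
      rw [lollipop_adj]
      simp only [Fin.castLEEmb_apply, Fin.val_castLE, ne_eq, Fin.castLE_inj] at hab ⊢
      omega
    simpa using hK.card_le_cliqueNum

end Lollipop

namespace SimpleGraph

variable {V : Type*} [Fintype V] {G : SimpleGraph V}

lemma cliqueNum_le_card : G.cliqueNum ≤ Fintype.card V := by
  obtain ⟨K, hK⟩ := G.exists_isNClique_cliqueNum
  exact hK.card_eq ▸ card_le_univ K

theorem Connected.sum_eccentricity_le_lollipop (hG : G.Connected) (hω : 2 ≤ G.cliqueNum) :
    ∑ v, eccentricity G v ≤ ∑ v, eccentricity (lollipop (Fintype.card V) G.cliqueNum) v := by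
  obtain ⟨K, hK⟩ := G.exists_isNClique_cliqueNum
  have hG := sum_eccentricity_add_le_of_isClique hG hK.isClique
    (card_pos.1 (by rw [hK.card_eq]; omega))
  have hL := sum_eccentricity_lollipop hω cliqueNum_le_card
  rw [hK.card_eq] at hG
  omega

end SimpleGraph

/-- For `2 ≤ k ≤ n`, `ecc (LP(n,k)) · ω(LP(n,k)) = (k/n)·⌊(-k² - 2k(n-1) + n(2+3n))/4⌋`,
and for every connected graph `G` on `n ≥ 4` vertices the value `ecc(G) · ω(G)` is at
most the value attained by some lollipop graph. -/
theorem avgEcc_mul_cliqueNum_lollipop {n : ℕ} (hn : 4 ≤ n) :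
    (∀ k, 2 ≤ k → k ≤ n →
      avgEcc (lollipop n k) * ((lollipop n k).cliqueNum : ℝ) =
        (k : ℝ) / n * (((n * (2 + 3 * n) - k * k - 2 * k * (n - 1)) / 4 : ℕ) : ℝ)) ∧
    (∀ (V : Type) [Fintype V] (G : SimpleGraph V), G.Connected → Fintype.card V = n →
      ∃ k, 2 ≤ k ∧ k ≤ n ∧
        avgEcc G * (G.cliqueNum : ℝ) ≤ avgEcc (lollipop n k) * (k : ℝ)) := by
  refine ⟨fun k hk hkn => ?_, fun V _ G hG hV => ?_⟩
  · have h₁ := sum_eccentricity_lollipop hk hkn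
    have h₂ := Nat.quadratic_div_four_add_sq_div_four (by omega) hkn
    rw [avgEcc, cliqueNum_lollipop hk hkn, Fintype.card_fin, ← Nat.cast_sum,
      show ∑ v, eccentricity (lollipop n k) v = (n * (2 + 3 * n) - k * k - 2 * k * (n - 1)) / 4
        by omega]
    ring
  · have : Nontrivial V := Fintype.one_lt_card_iff_nontrivial.1 (by omega)
    obtain ⟨w, hw⟩ := hG.preconnected.exists_adj_of_nontrivial hG.nonempty.some
    have hω := hw.two_le_cliqueNum
    refine ⟨G.cliqueNum, hω, hV ▸ cliqueNum_le_card, ?_⟩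
    have hsum := hV ▸ hG.sum_eccentricity_le_lollipop hω
    rw [avgEcc, avgEcc, hV, Fintype.card_fin, ← Nat.cast_sum, ← Nat.cast_sum]
    gcongr
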